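/- Let P be a measurable subset of Cantor space 2^ω and τ a finite binary string with relative density d(τ,P) = μ([τ]∩P)·2^|τ| ≥ δ. Define P̂ = {X ∈ 2^ω : X extends τ and for every σ with τ ⪯ σ ≺ X, d(σ,P) ≥ δ/2}. If S is a prefix-free set of strings extending τ whose cylinders cover [τ]\P̂, then μ(⋃_{σ∈S}[σ])·(1−δ/2) ≤ μ([τ]\P), and consequently P̂ has positive measure (assuming δ > 0). -/

import Mathlib

open MeasureTheory ENNReal

/-! ### Cantor space and the uniform (coin-flipping) measure -/

/-- The binary digits of a real number in `[0,1)`, giving a point of Cantor space. -/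
noncomputable def binaryDigits (x : ℝ) : ℕ → Bool :=
  fun n => decide (⌊x * 2 ^ (n + 1)⌋ % 2 = 1)

/-- The uniform (Lebesgue / coin-flipping) measure on Cantor space `2^ω`,
obtained as the pushforward of Lebesgue measure on `[0,1)` under binary expansion. -/
noncomputable def μCantor : Measure (ℕ → Bool) :=
  Measure.map binaryDigits (volume.restrict (Set.Ico (0 : ℝ) 1))

/-- `σ` is an initial segment of the infinite sequence `X`. -/
def IsPrefixOf (σ : List Bool) (X : ℕ → Bool) : Prop :=
  ∀ i : Fin σ.length, X i = σ.get i

/-- The cylinder determined by a finite binary string. -/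
def cylinder (σ : List Bool) : Set (ℕ → Bool) := {X | IsPrefixOf σ X}

/-- The open set generated by a set of finite binary strings. -/
def openOf (S : Set (List Bool)) : Set (ℕ → Bool) := ⋃ σ ∈ S, cylinder σ

/-- The density of a set `P` above the string `τ`: `μ([τ] ∩ P) · 2^{|τ|}`. -/
noncomputable def dens (τ : List Bool) (P : Set (ℕ → Bool)) : ℝ≥0∞ :=
  μCantor (cylinder τ ∩ P) * 2 ^ τ.length

/-- The length-`n` initial segment of `X`, as a finite binary string. -/
def strPrefix (X : ℕ → Bool) (n : ℕ) : List Bool := (List.range n).map X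

/-- A set of strings is prefix-free if no element is a proper prefix of another. -/
def PrefixFreeSet (S : Set (List Bool)) : Prop :=
  ∀ σ ∈ S, ∀ τ ∈ S, σ <+: τ → σ = τ

/-- The weight `∑_{σ ∈ S} 2^{-|σ|}` of a set of strings. -/
noncomputable def weight (S : Set (List Bool)) : ℝ≥0∞ :=
  ∑' σ : S, 2⁻¹ ^ (σ : List Bool).length

/-- A set of strings is bounded if its weight is finite. -/
def BoundedStr (S : Set (List Bool)) : Prop := weight S < ⊤

/-- The tail `X(·+k)` of an infinite binary sequence. -/
def tailSeq (X : ℕ → Bool) (k : ℕ) : ℕ → Bool := fun n => X (n + k)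

/-! ### Oracle computability -/

/-- The `e`-th computably enumerable set of naturals (the domain of the `e`-th
partial computable function). -/
def WEnum (e n : ℕ) : Prop := ((Denumerable.ofNat Nat.Partrec.Code e).eval n).Dom

/-- `OracleComputes e X n m` holds if the `e`-th Turing functional with oracle `X`
outputs `m` on input `n`; a Turing functional is presented by the c.e. set `W_e`
of coded axioms `(σ, n, m)`, and `Γ_e^X(n) = m` iff some initial segment `σ` of `X`
has `(σ, n, m) ∈ W_e`. -/
def OracleComputes (e : ℕ) (X : ℕ → Bool) (n m : ℕ) : Prop :=
  ∃ σ : List Bool, IsPrefixOf σ X ∧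
    WEnum e (Nat.pair (Encodable.encode σ) (Nat.pair n m))

def natOfBool (b : Bool) : ℕ := cond b 1 0

/-- `f : ℕ → ℕ` is computable with oracle `A`: some Turing functional with oracle `A`
has graph exactly `f`. -/
def FnComputableIn (f : ℕ → ℕ) (A : ℕ → Bool) : Prop :=
  ∃ e, ∀ n m, OracleComputes e A n m ↔ m = f n

/-- Turing reducibility `B ≤_T A` for subsets of `ω` (as elements of Cantor space). -/
def TuringLE (B A : ℕ → Bool) : Prop := FnComputableIn (fun n => natOfBool (B n)) A

/-- Turing equivalence. -/
def TuringEquiv (A B : ℕ → Bool) : Prop := TuringLE A B ∧ TuringLE B A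

/-- The Turing join `A ⊕ B`. -/
def joinSet (A B : ℕ → Bool) : ℕ → Bool :=
  fun n => if n % 2 = 0 then A (n / 2) else B (n / 2)

open Classical in
/-- The Turing jump `A′ = {e : Γ_e^A(e)↓}`. -/
noncomputable def jump (A : ℕ → Bool) : ℕ → Bool :=
  fun e => decide (∃ m, OracleComputes e A e m)

/-- The empty oracle. -/
def emptyOracle : ℕ → Bool := fun _ => false

/-- The halting problem `∅′`. -/
noncomputable def zeroJump : ℕ → Bool := jump emptyOracle

/-- A set is computable iff it is Turing reducible to the empty oracle. -/
def ComputableSet (A : ℕ → Bool) : Prop := TuringLE A emptyOracle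

/-- A set of naturals is c.e. in `A`. -/
def CeIn (A : ℕ → Bool) (S : Set ℕ) : Prop :=
  ∃ e, ∀ n, n ∈ S ↔ ∃ m, OracleComputes e A n m

/-- A set of strings is c.e. in `A`. -/
def CeStrIn (A : ℕ → Bool) (S : Set (List Bool)) : Prop :=
  ∃ e, ∀ σ : List Bool, σ ∈ S ↔ ∃ m, OracleComputes e A (Encodable.encode σ) m

/-- A c.e. set of strings. -/
def CeStr (S : Set (List Bool)) : Prop := CeStrIn emptyOracle S

/-! ### Π⁰₁ classes, Martin-Löf randomness, K-triviality -/

/-- A `Π⁰₁(A)` class: the complement of the union of cylinders over an `A`-c.e.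
set of strings. -/
def Pi01In (A : ℕ → Bool) (P : Set (ℕ → Bool)) : Prop :=
  ∃ S : Set (List Bool), CeStrIn A S ∧ P = (openOf S)ᶜ

/-- A `Π⁰₁` class. -/
def Pi01 (P : Set (ℕ → Bool)) : Prop := Pi01In emptyOracle P

/-- The `n`-th level of the `e`-th `A`-effective sequence of open sets. -/
def testLevel (e : ℕ) (A : ℕ → Bool) (n : ℕ) : Set (ℕ → Bool) :=
  openOf {σ | ∃ m, OracleComputes e A (Nat.pair n (Encodable.encode σ)) m}

/-- A Martin-Löf test relative to `A`: a uniformly `A`-c.e. sequence of open sets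
`G n` with `μ(G n) ≤ 2^{-n}`. -/
def MLTestIn (A : ℕ → Bool) (G : ℕ → Set (ℕ → Bool)) : Prop :=
  (∃ e, ∀ n, G n = testLevel e A n) ∧ ∀ n, μCantor (G n) ≤ 2⁻¹ ^ n

/-- `X` is Martin-Löf random relative to `A`: it passes every `A`-Martin-Löf test. -/
def MLRandomIn (A X : ℕ → Bool) : Prop :=
  ∀ G : ℕ → Set (ℕ → Bool), MLTestIn A G → ∃ n, X ∉ G n

/-- `X` is Martin-Löf random. -/
def MLRandom (X : ℕ → Bool) : Prop := MLRandomIn emptyOracle X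

/-- The domain of the `e`-th machine, viewed as a set of binary strings. -/
def machineDom (e : ℕ) : Set (List Bool) :=
  {σ | ((Denumerable.ofNat Nat.Partrec.Code e).eval (Encodable.encode σ)).Dom}

/-- The `e`-th machine is prefix-free. -/
def PrefixFreeMachine (e : ℕ) : Prop := PrefixFreeSet (machineDom e)

/-- Prefix-free Kolmogorov complexity (defined, up to an additive constant, as the
least `|σ| + 2e + 2` over prefix-free machines `e` and programs `σ` producing `x`). -/
noncomputable def Kcpx (x : ℕ) : ℕ :=
  sInf {k | ∃ e, ∃ σ : List Bool, PrefixFreeMachine e ∧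
    x ∈ (Denumerable.ofNat Nat.Partrec.Code e).eval (Encodable.encode σ) ∧
    k = σ.length + 2 * e + 2}

/-- `K(n)` means `K(1^n)`. -/
noncomputable def KofNat (n : ℕ) : ℕ := Kcpx (Encodable.encode (List.replicate n true))

/-- `A` is K-trivial: `K(A↾n) ≤ K(n) + c` for some constant `c`. -/
def KTrivial (A : ℕ → Bool) : Prop :=
  ∃ c, ∀ n, Kcpx (Encodable.encode (strPrefix A n)) ≤ KofNat n + c

/-!
The sequences of `[τ]` that leave `P̂` are exactly those passing through a minimal string
`ρ ⪰ τ` with `d(ρ, P) < δ/2`. These minimal strings form a prefix-free set generating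
`[τ] \ P̂`, and each of their cylinders has at least the fraction `1 - δ/2` of its measure
outside `P`; summing over the disjoint cylinders gives the inequality. If `P̂` were null, these
cylinders would fill `[τ]` up to measure zero, so `(1 - δ/2) 2^{-|τ|} ≤ μ([τ] \ P) ≤ (1 - δ) 2^{-|τ|}`,
which fails for `δ > 0`.
-/

open Set

section Strings

variable {σ ρ : List Bool} {X : ℕ → Bool}

lemma isPrefixOf_iff : IsPrefixOf σ X ↔ ∀ i (h : i < σ.length), X i = σ[i] :=
  ⟨fun h i hi => h ⟨i, hi⟩, fun h i => h i i.2⟩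

lemma strPrefix_length (X : ℕ → Bool) (n : ℕ) : (strPrefix X n).length = n := by
  simp [strPrefix]

lemma isPrefixOf_strPrefix (X : ℕ → Bool) (n : ℕ) : IsPrefixOf (strPrefix X n) X :=
  isPrefixOf_iff.2 fun i hi => by simp [strPrefix]

lemma IsPrefixOf.eq_strPrefix (h : IsPrefixOf σ X) : σ = strPrefix X σ.length :=
  List.ext_getElem (strPrefix_length X _).symm fun i hi _ => by
    simp [strPrefix, ← isPrefixOf_iff.1 h i hi]

lemma IsPrefixOf.of_prefix (hσρ : σ <+: ρ) (hρ : IsPrefixOf ρ X) : IsPrefixOf σ X :=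
  isPrefixOf_iff.2 fun i hi => by
    rw [isPrefixOf_iff.1 hρ i (hi.trans_le hσρ.length_le), hσρ.getElem hi]

lemma IsPrefixOf.prefix_strPrefix (h : IsPrefixOf σ X) {n : ℕ} (hn : σ.length ≤ n) :
    σ <+: strPrefix X n := by
  have : strPrefix X σ.length = (strPrefix X n).take σ.length := by
    simp [strPrefix, ← List.map_take, List.take_range, Nat.min_eq_left hn]
  rw [h.eq_strPrefix, this]
  exact List.take_prefix _ _

lemma isPrefixOf_append_singleton {b : Bool} :
    IsPrefixOf (σ ++ [b]) X ↔ IsPrefixOf σ X ∧ X σ.length = b := by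
  simp only [isPrefixOf_iff, List.length_append, List.length_singleton]
  refine ⟨fun h => ⟨fun i hi => ?_, by simpa using h σ.length (by omega)⟩, ?_⟩
  · rw [h i (by omega), List.getElem_append_left hi]
  · rintro ⟨hσ, hb⟩ i hi
    rcases (Nat.lt_succ_iff.mp hi).lt_or_eq with hi | rfl
    · rw [List.getElem_append_left hi, hσ i hi]
    · simpa using hb

lemma cylinder_anti (h : σ <+: ρ) : cylinder ρ ⊆ cylinder σ :=
  fun _ hX => IsPrefixOf.of_prefix h hX

lemma disjoint_cylinder (hσρ : ¬ σ <+: ρ) (hρσ : ¬ ρ <+: σ) :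
    Disjoint (cylinder σ) (cylinder ρ) :=
  Set.disjoint_left.2 fun X (hσ : IsPrefixOf σ X) (hρ : IsPrefixOf ρ X) =>
    (List.prefix_or_prefix_of_prefix (hσ.prefix_strPrefix (Nat.le_add_right _ ρ.length))
      (hρ.prefix_strPrefix (Nat.le_add_left _ _))).elim hσρ hρσ

lemma measurableSet_cylinder (σ : List Bool) : MeasurableSet (cylinder σ) := by
  have : cylinder σ = ⋂ i : Fin σ.length, (fun X : ℕ → Bool => X i) ⁻¹' {σ.get i} := by
    ext X; rw [mem_iInter]; rfl
  rw [this]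
  exact .iInter fun i => measurable_pi_apply _ (measurableSet_singleton _)

end Strings

section UniformMeasure

/-- The integer with binary expansion `σ`, most significant digit first. -/
def binaryValue (σ : List Bool) : ℤ := σ.foldl (fun a b => 2 * a + cond b 1 0) 0

lemma binaryValue_append_singleton (σ : List Bool) (b : Bool) :
    binaryValue (σ ++ [b]) = 2 * binaryValue σ + cond b 1 0 := by
  simp [binaryValue]

lemma binaryValue_nonneg (σ : List Bool) : 0 ≤ binaryValue σ := by
  induction σ using List.reverseRecOn with
  | nil => simp [binaryValue]
  | append_singleton σ b ih => rw [binaryValue_append_singleton]; cases b <;> simp <;> omega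

lemma binaryValue_lt (σ : List Bool) : binaryValue σ < 2 ^ σ.length := by
  induction σ using List.reverseRecOn with
  | nil => simp [binaryValue]
  | append_singleton σ b ih =>
    rw [binaryValue_append_singleton, List.length_append, List.length_singleton, pow_succ]
    cases b <;> simp <;> omega

lemma measurable_binaryDigits : Measurable binaryDigits :=
  measurable_pi_iff.2 fun _ => (measurable_of_countable (fun k : ℤ => decide (k % 2 = 1))).comp
    (Int.measurable_floor.comp (measurable_id.mul_const _))

lemma isPrefixOf_binaryDigits_iff {x : ℝ} (hx : x ∈ Ico 0 1) (σ : List Bool) :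
    IsPrefixOf σ (binaryDigits x) ↔ ⌊x * 2 ^ σ.length⌋ = binaryValue σ := by
  induction σ using List.reverseRecOn with
  | nil => simpa [isPrefixOf_iff, binaryValue, Int.floor_eq_zero_iff] using hx
  | append_singleton σ b ih =>
    have hdiv : ⌊x * 2 ^ (σ.length + 1)⌋ / 2 = ⌊x * 2 ^ σ.length⌋ := by
      have h := Int.floor_div_natCast (x * 2 ^ (σ.length + 1)) 2
      push_cast at h
      rw [← h, pow_succ, ← mul_assoc, mul_div_cancel_right₀ _ two_ne_zero]
    rw [isPrefixOf_append_singleton, ih, binaryValue_append_singleton, List.length_append,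
      List.length_singleton, ← hdiv]
    cases b <;> simp [binaryDigits] <;> omega

lemma binaryDigits_preimage_cylinder_inter_Ico (σ : List Bool) :
    binaryDigits ⁻¹' cylinder σ ∩ Ico 0 1 =
      Ico ((binaryValue σ : ℝ) / 2 ^ σ.length) ((binaryValue σ + 1) / 2 ^ σ.length) := by
  have hpow : (0 : ℝ) < 2 ^ σ.length := by positivity
  have hIco : ∀ x : ℝ, x ∈ Ico ((binaryValue σ : ℝ) / 2 ^ σ.length)
      ((binaryValue σ + 1) / 2 ^ σ.length) ↔ ⌊x * 2 ^ σ.length⌋ = binaryValue σ := by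
    intro x
    rw [Int.floor_eq_iff, mem_Ico, div_le_iff₀ hpow, lt_div_iff₀ hpow]
  ext x
  rw [hIco, mem_inter_iff, mem_preimage]
  refine ⟨fun ⟨hσ, hx⟩ => (isPrefixOf_binaryDigits_iff hx σ).1 hσ, fun h => ?_⟩
  have hx : x ∈ Ico 0 1 := by
    have hv0 : (0 : ℝ) ≤ binaryValue σ := by exact_mod_cast binaryValue_nonneg σ
    have hv1 : (binaryValue σ : ℝ) + 1 ≤ 2 ^ σ.length := by
      exact_mod_cast binaryValue_lt σ
    obtain ⟨h₁, h₂⟩ := (hIco x).2 h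
    exact ⟨(div_nonneg hv0 hpow.le).trans h₁, h₂.trans_le ((div_le_one hpow).2 hv1)⟩
  exact ⟨(isPrefixOf_binaryDigits_iff hx σ).2 h, hx⟩

lemma μCantor_cylinder (σ : List Bool) : μCantor (cylinder σ) = 2⁻¹ ^ σ.length := by
  rw [μCantor, Measure.map_apply measurable_binaryDigits (measurableSet_cylinder σ),
    Measure.restrict_apply' measurableSet_Ico, binaryDigits_preimage_cylinder_inter_Ico,
    Real.volume_Ico, ← sub_div, add_sub_cancel_left, one_div, ← inv_pow,
    ENNReal.ofReal_pow (by norm_num), ENNReal.ofReal_inv_of_pos two_pos, ENNReal.ofReal_ofNat]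

end UniformMeasure

lemma measure_biUnion_of_prefixFree (μ : Measure (ℕ → Bool)) {S : Set (List Bool)}
    (hS : PrefixFreeSet S) {f : List Bool → Set (ℕ → Bool)} (hf : ∀ σ, MeasurableSet (f σ))
    (hf_sub : ∀ σ, f σ ⊆ cylinder σ) :
    μ (⋃ σ ∈ S, f σ) = ∑' σ : S, μ (f σ) :=
  measure_biUnion S.to_countable
    (fun σ hσ ρ hρ hne => (disjoint_cylinder (fun h => hne (hS σ hσ ρ hρ h))
      (fun h => hne (hS ρ hρ σ hσ h).symm)).mono (hf_sub σ) (hf_sub ρ))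
    fun σ _ => hf σ

section Density

variable {P : Set (ℕ → Bool)}

lemma measure_cylinder_inter (σ : List Bool) (P : Set (ℕ → Bool)) :
    μCantor (cylinder σ ∩ P) = dens σ P * 2⁻¹ ^ σ.length := by
  rw [dens, mul_assoc, ← mul_pow, ENNReal.mul_inv_cancel two_ne_zero ENNReal.ofNat_ne_top,
    one_pow, mul_one]

lemma dens_le_one (σ : List Bool) (P : Set (ℕ → Bool)) : dens σ P ≤ 1 := by
  have h := measure_mono (μ := μCantor) (inter_subset_left (s := cylinder σ) (t := P))
  rw [measure_cylinder_inter, ← one_mul (μCantor (cylinder σ)), μCantor_cylinder] at h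
  exact (ENNReal.mul_le_mul_iff_left (pow_ne_zero _ (by simp)) (ENNReal.pow_ne_top (by simp))).1 h

lemma measure_cylinder_diff (hP : MeasurableSet P) (σ : List Bool) :
    μCantor (cylinder σ \ P) = (1 - dens σ P) * 2⁻¹ ^ σ.length := by
  have hfin : (2⁻¹ : ℝ≥0∞) ^ σ.length ≠ ⊤ := ENNReal.pow_ne_top (by simp)
  rw [ENNReal.sub_mul fun _ _ => hfin, one_mul, ← measure_cylinder_inter, ← μCantor_cylinder]
  refine ENNReal.eq_sub_of_add_eq ?_ ?_
  · exact ne_top_of_le_ne_top (μCantor_cylinder σ ▸ hfin) (measure_mono inter_subset_left)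
  · rw [add_comm, measure_inter_add_sdiff _ hP]

lemma measure_openOf_mul_le (hP : MeasurableSet P) {S : Set (List Bool)} {τ : List Bool}
    {r : ℝ≥0∞} (hS : PrefixFreeSet S) (hext : ∀ σ ∈ S, τ <+: σ)
    (hlow : ∀ σ ∈ S, dens σ P ≤ r) :
    μCantor (openOf S) * (1 - r) ≤ μCantor (cylinder τ \ P) :=
  calc μCantor (openOf S) * (1 - r)
      = ∑' σ : S, (1 - r) * 2⁻¹ ^ (σ : List Bool).length := by
        rw [openOf, measure_biUnion_of_prefixFree _ hS measurableSet_cylinder fun _ => subset_rfl,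
          ← ENNReal.tsum_mul_right]
        simp only [μCantor_cylinder, mul_comm]
    _ ≤ ∑' σ : S, μCantor (cylinder σ \ P) := ENNReal.tsum_le_tsum fun σ => by
        rw [measure_cylinder_diff hP]
        gcongr
        exact hlow σ σ.2
    _ = μCantor (⋃ σ ∈ S, cylinder σ \ P) :=
        (measure_biUnion_of_prefixFree _ hS (fun σ => (measurableSet_cylinder σ).diff hP)
          fun _ => sdiff_subset).symm
    _ ≤ μCantor (cylinder τ \ P) :=
        measure_mono <| iUnion₂_subset fun σ hσ =>
          sdiff_subset_sdiff_left (cylinder_anti (hext σ hσ))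

end Density

section MinimalExtensions

def minimalExtensions (p : List Bool → Prop) (τ : List Bool) : Set (List Bool) :=
  {ρ | τ <+: ρ ∧ p ρ ∧ ∀ ρ', τ <+: ρ' → ρ' <+: ρ → p ρ' → ρ' = ρ}

variable {p : List Bool → Prop} {τ : List Bool}

lemma prefixFreeSet_minimalExtensions : PrefixFreeSet (minimalExtensions p τ) :=
  fun _ hρ _ hρ' hpre => hρ'.2.2 _ hρ.1 hpre hρ.2.1

lemma openOf_minimalExtensions :
    openOf (minimalExtensions p τ) = {X | ∃ σ, τ <+: σ ∧ IsPrefixOf σ X ∧ p σ} := by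
  classical
  ext X
  simp only [openOf, mem_iUnion, exists_prop, mem_ofPred_eq]
  constructor
  · rintro ⟨ρ, ⟨hτρ, hρ, -⟩, hρX⟩
    exact ⟨ρ, hτρ, hρX, hρ⟩
  · rintro ⟨σ, hτσ, hσX, hσ⟩
    have hex : ∃ n, τ <+: strPrefix X n ∧ p (strPrefix X n) :=
      ⟨σ.length, hσX.eq_strPrefix ▸ ⟨hτσ, hσ⟩⟩
    obtain ⟨hτN, hN⟩ := Nat.find_spec hex
    refine ⟨strPrefix X (Nat.find hex), ⟨hτN, hN, fun ρ' hτρ' hρ'N hρ' => ?_⟩,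
      isPrefixOf_strPrefix X _⟩
    have hρ'X : IsPrefixOf ρ' X := IsPrefixOf.of_prefix hρ'N (isPrefixOf_strPrefix X _)
    refine hρ'N.eq_of_length_le ?_
    rw [strPrefix_length]
    exact Nat.find_min' hex (hρ'X.eq_strPrefix ▸ ⟨hτρ', hρ'⟩)

end MinimalExtensions

theorem stmt0_general (P : Set (ℕ → Bool)) (hP : MeasurableSet P) (τ : List Bool)
    (δ : ℝ≥0∞) (hδ : 0 < δ) (hd : δ ≤ dens τ P)
    (Phat : Set (ℕ → Bool))
    (hPhat : Phat = {X | IsPrefixOf τ X ∧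
      ∀ σ : List Bool, τ <+: σ → IsPrefixOf σ X → δ / 2 ≤ dens σ P})
    (S : Set (List Bool))
    (hcover : cylinder τ \ Phat = openOf S) :
    μCantor (openOf S) * (1 - δ / 2) ≤ μCantor (cylinder τ \ P) ∧
      0 < μCantor Phat := by
  have hS : openOf S = openOf (minimalExtensions (fun σ => dens σ P < δ / 2) τ) := by
    rw [← hcover, openOf_minimalExtensions, hPhat]
    ext X
    simp only [mem_sdiff, mem_ofPred_eq, not_and, not_forall, not_le, exists_prop]
    exact ⟨fun ⟨hτX, h⟩ => h hτX,
      fun ⟨σ, hτσ, hσX, hσ⟩ => ⟨IsPrefixOf.of_prefix hτσ hσX, fun _ => ⟨σ, hτσ, hσX, hσ⟩⟩⟩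
  have hbound : μCantor (openOf S) * (1 - δ / 2) ≤ μCantor (cylinder τ \ P) :=
    hS ▸ measure_openOf_mul_le hP prefixFreeSet_minimalExtensions (fun _ hσ => hσ.1)
      fun _ hσ => hσ.2.1.le
  refine ⟨hbound, pos_iff_ne_zero.2 fun hnull => ?_⟩
  have hδ1 : δ ≤ 1 := hd.trans (dens_le_one τ P)
  rw [← hcover, measure_sdiff_null hnull, μCantor_cylinder, measure_cylinder_diff hP,
    mul_comm] at hbound
  have hle : 1 - δ / 2 ≤ 1 - δ :=
    (ENNReal.mul_le_mul_iff_left (pow_ne_zero _ (by simp)) (ENNReal.pow_ne_top (by simp))).1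
      (hbound.trans (by gcongr))
  rw [ENNReal.sub_le_sub_iff_left hδ1 ENNReal.one_ne_top] at hle
  exact (ENNReal.half_lt_self hδ.ne' (ne_top_of_le_ne_top ENNReal.one_ne_top hδ1)).not_ge hle

/-- counting argument showing that `P̂` has positive measure. -/
theorem stmt0 (P : Set (ℕ → Bool)) (hP : MeasurableSet P) (τ : List Bool)
    (δ : ℝ≥0∞) (hδ : 0 < δ) (hd : δ ≤ dens τ P)
    (Phat : Set (ℕ → Bool))
    (hPhat : Phat = {X | IsPrefixOf τ X ∧
      ∀ σ : List Bool, τ <+: σ → IsPrefixOf σ X → δ / 2 ≤ dens σ P})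
    (S : Set (List Bool)) (hpf : PrefixFreeSet S) (hext : ∀ σ ∈ S, τ <+: σ)
    (hcover : cylinder τ \ Phat = openOf S) :
    μCantor (openOf S) * (1 - δ / 2) ≤ μCantor (cylinder τ \ P) ∧
      0 < μCantor Phat :=
  stmt0_general P hP τ δ hδ hd Phat hPhat S hcover
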